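/- arXiv:2407.13489 — 2 statements merged into one kernel-verified Lean document; each statement's English description precedes it below -/
import Mathlib

section
/- Let (X, G, σ) be the self-similar dynamical system in ℓ^∞ with contraction ratio 0 < c < 1 and metric d, let {F_n} be a Følner sequence in G, and let D ≥ 1 be a constant with diam(X, d) < D. Then for every natural number n, every 0 < ε < 1 and every point q ∈ X, there exists a map φ : X → B̄_{d_{F_n}}(q, ε) (the closed ε-ball around q for the metric d_{F_n}) such that d_{F_n}(φ(x), φ(y)) ≥ (cε/D)·d_{F_n}(x, y) for all x, y ∈ X. -/
open Filter Set Topology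
open scoped ENNReal

noncomputable section

namespace MeanDimPaper

/-- Diameter of a set with respect to a distance function `ρ`. -/
def diamR {X : Type*} (ρ : X → X → ℝ) (E : Set X) : ℝ :=
  sSup ((fun p : X × X => ρ p.1 p.2) '' (E ×ˢ E))

/-- Minimal number of open sets of `ρ`-diameter `< ε` needed to cover `A`
(the `ε`-covering number `#(A, ρ, ε)`). -/
def covNumOn {X : Type*} [TopologicalSpace X] (ρ : X → X → ℝ) (A : Set X) (ε : ℝ) : ℕ :=
  sInf {n : ℕ | ∃ U : Fin n → Set X,
    (∀ i, IsOpen (U i)) ∧ (∀ i, diamR ρ (U i) < ε) ∧ A ⊆ ⋃ i, U i}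

/-- The `ε`-scale `s`-dimensional Hausdorff pre-measure `H^s_ε(A, ρ)`. -/
def hausPre {X : Type*} (ρ : X → X → ℝ) (A : Set X) (s ε : ℝ) : ℝ≥0∞ :=
  ⨅ (E : ℕ → Set X) (_ : A ⊆ (⋃ i, E i) ∧ ∀ i, diamR ρ (E i) < ε),
    ∑' i, ENNReal.ofReal (diamR ρ (E i) ^ s)

/-- The `ε`-scale Hausdorff dimension `dim_H(A, ρ, ε) = sup{s ≥ 0 : H^s_ε ≥ 1}`. -/
def dimHof {X : Type*} (ρ : X → X → ℝ) (A : Set X) (ε : ℝ) : ℝ :=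
  sSup {s : ℝ | 0 ≤ s ∧ 1 ≤ hausPre ρ A s ε}

/-- Dynamical (Bowen) distance `d_F(x,y) = max_{g ∈ F} ρ(gx, gy)`. -/
def dynDist {X G : Type*} (ρ : X → X → ℝ) (act : G → X → X) (F : Finset G) (x y : X) : ℝ :=
  sSup ((fun g => ρ (act g x) (act g y)) '' (F : Set G))

/-- Upper mean Hausdorff dimension w.r.t. a Følner sequence `F`:
`lim_{ε→0} limsup_{n→∞} dim_H(A, d_{F_n}, ε)/|F_n|` (the monotone limit as `ε → 0`
is expressed as a `limsup` along `𝓝[>] 0`). -/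
def upperMdimH {X G : Type*} (ρ : X → X → ℝ) (act : G → X → X)
    (F : ℕ → Finset G) (A : Set X) : EReal :=
  limsup (fun ε : ℝ =>
      limsup (fun n : ℕ => ((dimHof (dynDist ρ act (F n)) A ε / (F n).card : ℝ) : EReal)) atTop)
    (𝓝[>] (0 : ℝ))

/-- Lower mean Hausdorff dimension: `lim_{ε→0} liminf_{n→∞} dim_H(A, d_{F_n}, ε)/|F_n|`. -/
def lowerMdimH {X G : Type*} (ρ : X → X → ℝ) (act : G → X → X)
    (F : ℕ → Finset G) (A : Set X) : EReal :=
  limsup (fun ε : ℝ =>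
      liminf (fun n : ℕ => ((dimHof (dynDist ρ act (F n)) A ε / (F n).card : ℝ) : EReal)) atTop)
    (𝓝[>] (0 : ℝ))

/-- `S(A, G, ρ, ε)/log(1/ε) = lim_n log #(A, d_{F_n}, ε)/(|F_n| log(1/ε))`
(the limit over `n` exists by the Ornstein–Weiss lemma; it is expressed as a `limsup`). -/
def mdimMRate {X G : Type*} [TopologicalSpace X] (ρ : X → X → ℝ) (act : G → X → X)
    (F : ℕ → Finset G) (A : Set X) (ε : ℝ) : EReal :=
  limsup (fun n : ℕ =>
    ((Real.log (covNumOn (dynDist ρ act (F n)) A ε) /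
        ((F n).card * Real.log (1 / ε)) : ℝ) : EReal)) atTop

/-- Upper metric mean dimension. -/
def upperMdimM {X G : Type*} [TopologicalSpace X] (ρ : X → X → ℝ) (act : G → X → X)
    (F : ℕ → Finset G) (A : Set X) : EReal :=
  limsup (fun ε : ℝ => mdimMRate ρ act F A ε) (𝓝[>] (0 : ℝ))

/-- Lower metric mean dimension. -/
def lowerMdimM {X G : Type*} [TopologicalSpace X] (ρ : X → X → ℝ) (act : G → X → X)
    (F : ℕ → Finset G) (A : Set X) : EReal :=
  liminf (fun ε : ℝ => mdimMRate ρ act F A ε) (𝓝[>] (0 : ℝ))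

/-- Topological entropy of the `G`-system `(A, act)`:
`lim_{ε→0} lim_n log #(A, d_{F_n}, ε)/|F_n|`. -/
def hTop {X G : Type*} [TopologicalSpace X] (ρ : X → X → ℝ) (act : G → X → X)
    (F : ℕ → Finset G) (A : Set X) : EReal :=
  limsup (fun ε : ℝ =>
      limsup (fun n : ℕ =>
        ((Real.log (covNumOn (dynDist ρ act (F n)) A ε) / (F n).card : ℝ) : EReal)) atTop)
    (𝓝[>] (0 : ℝ))

/-- The Bowen distance of a `G × ℕ`-action over `F × {0, …, N-1}`. -/
def dynDist2 {X G : Type*} (ρ : X → X → ℝ) (act : G → X → X) (T : X → X)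
    (F : Finset G) (N : ℕ) (x y : X) : ℝ :=
  sSup ((fun p : G × ℕ => ρ (act p.1 (T^[p.2] x)) (act p.1 (T^[p.2] y))) ''
    ((F : Set G) ×ˢ (Iio N)))

/-- Topological entropy of a `G × ℕ`-action:
`lim_{ε→0} lim_n log #(A, d^{S,T}_{F_n × F'_n}, ε)/(n |F_n|)`. -/
def hTop2 {X G : Type*} [TopologicalSpace X] (ρ : X → X → ℝ) (act : G → X → X) (T : X → X)
    (F : ℕ → Finset G) (A : Set X) : EReal :=
  limsup (fun ε : ℝ =>
      limsup (fun n : ℕ =>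
        ((Real.log (covNumOn (dynDist2 ρ act T (F n) n) A ε) / (n * (F n).card) : ℝ) : EReal))
        atTop)
    (𝓝[>] (0 : ℝ))

/-- The weighted covering quantity `#^w(π, A, ρX, ρY, ε)` of a factor map. -/
def wCovNum {X Y : Type*} [TopologicalSpace X] [TopologicalSpace Y] (π : X → Y)
    (ρX : X → X → ℝ) (ρY : Y → Y → ℝ) (A : Set X) (B : Set Y) (w ε : ℝ) : ℝ :=
  sInf {r : ℝ | ∃ (t : ℕ) (V : Fin t → Set Y), (∀ k, IsOpen (V k)) ∧
      (∀ k, diamR ρY (V k) < ε) ∧ B ⊆ (⋃ k, V k) ∧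
      r = ∑ k, (covNumOn ρX (A ∩ π ⁻¹' (V k)) ε : ℝ) ^ w}

/-- The `w`-weighted topological entropy `h_top^w(π, G)` of a factor map `π`. -/
def hTopW {X Y G : Type*} [TopologicalSpace X] [TopologicalSpace Y] (π : X → Y)
    (ρX : X → X → ℝ) (ρY : Y → Y → ℝ) (actX : G → X → X) (actY : G → Y → Y)
    (F : ℕ → Finset G) (A : Set X) (B : Set Y) (w : ℝ) : EReal :=
  limsup (fun ε : ℝ =>
      limsup (fun n : ℕ =>
        ((Real.log (wCovNum π (dynDist ρX actX (F n)) (dynDist ρY actY (F n)) A B w ε) /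
            (F n).card : ℝ) : EReal)) atTop)
    (𝓝[>] (0 : ℝ))

/-- A Følner sequence in a group `G`. -/
def IsFolner {G : Type*} [Group G] [DecidableEq G] (F : ℕ → Finset G) : Prop :=
  (∀ n, (F n).Nonempty) ∧
    ∀ g : G, Tendsto
      (fun n => (((F n) \ ((F n).image (fun x => g * x))).card : ℝ) / (F n).card)
      atTop (𝓝 0)

/-- The (right) shift: `σ^h(x)_g = x_{gh}`. -/
def shiftAct {G Λ : Type*} [Mul G] (h : G) (x : G → Λ) : G → Λ := fun g => x (g * h)

/-- Word length w.r.t. a generating set `S`. -/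
def wordLength {G : Type*} [Group G] (S : Finset G) (g : G) : ℕ :=
  sInf {n : ℕ | ∃ l : List G, l.length = n ∧ (∀ x ∈ l, x ∈ S) ∧ l.prod = g}

/-- The ball `B_S(m) = {g : ℓ_S(g) ≤ m}`, as a finset (defined recursively). -/
def ballS {G : Type*} [Group G] [DecidableEq G] (S : Finset G) : ℕ → Finset G
  | 0 => {1}
  | (m + 1) => ballS S m ∪ Finset.image₂ (· * ·) (ballS S m) S

open Classical in
/-- The metric `d(x, y) = 2^{-min{ℓ_S(g) : x_g ≠ y_g}}` on a full shift. -/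
def shiftDist {G Λ : Type*} [Group G] (S : Finset G) (x y : G → Λ) : ℝ :=
  if x = y then 0
  else (2 : ℝ) ^ (-((sInf {n : ℕ | ∃ g, x g ≠ y g ∧ wordLength S g = n} : ℕ) : ℤ))

/-- The carpet system `X_Ω ⊆ [0,1]^G × [0,1]^G`. -/
def carpetSet {G : Type*} (a b : ℕ) (Ω : Set (G → Fin a × Fin b)) :
    Set ((G → ℝ) × (G → ℝ)) :=
  {p | ∃ z : ℕ → (G → Fin a × Fin b), (∀ m, z m ∈ Ω) ∧
        (∀ g, p.1 g = ∑' m : ℕ, ((z m g).1 : ℝ) / (a : ℝ) ^ (m + 1)) ∧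
        (∀ g, p.2 g = ∑' m : ℕ, ((z m g).2 : ℝ) / (b : ℝ) ^ (m + 1))}

/-- Metric on `[0,1]^G × [0,1]^G`: `d((x,y),(x',y')) = Σ_g α_g max(|x_g-x'_g|, |y_g-y'_g|)`. -/
def carpetDist {G : Type*} (α : G → ℝ) (p q : (G → ℝ) × (G → ℝ)) : ℝ :=
  ∑' g, α g * max |p.1 g - q.1 g| |p.2 g - q.2 g|

/-- The shift on `[0,1]^G × [0,1]^G`. -/
def shiftPair {G : Type*} [Mul G] (h : G) (p : (G → ℝ) × (G → ℝ)) : (G → ℝ) × (G → ℝ) :=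
  (shiftAct h p.1, shiftAct h p.2)

/-- The metric `d(x,y) = Σ_g α_g |x_g - y_g|` on (a bounded subset of) `ℝ^G`. -/
def sumDist {G : Type*} (α : G → ℝ) (x y : G → ℝ) : ℝ := ∑' g, α g * |x g - y g|

/-- The metric `d(x,y) = Σ_g α_g ρ(x_g, y_g)` on `(ℝ/ℤ)^G`. -/
def torusDist {G : Type*} (α : G → ℝ) (x y : G → AddCircle (1 : ℝ)) : ℝ :=
  ∑' g, α g * dist (x g) (y g)

/-- `Widim_ε(A, ρ) ≤ n`: there is an `ε`-embedding of `A` into an at most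
`n`-dimensional simplicial complex. -/
def widimLE {X : Type*} [TopologicalSpace X] (ρ : X → X → ℝ) (A : Set X) (ε : ℝ) (n : ℕ) :
    Prop :=
  ∃ (K : Geometry.SimplicialComplex ℝ (ℕ → ℝ)) (f : A → K.space), Continuous f ∧
    (∀ s ∈ K.faces, s.card ≤ n + 1) ∧
    ∀ y : K.space, diamR (fun u v : A => ρ u.1 v.1) (f ⁻¹' {y}) < ε

/-- `Widim_ε(A, ρ)`. -/
def widimOn {X : Type*} [TopologicalSpace X] (ρ : X → X → ℝ) (A : Set X) (ε : ℝ) : ℕ :=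
  sInf {n : ℕ | widimLE ρ A ε n}

/-- Mean (topological) dimension `mdim(A, G) = lim_{ε→0} lim_n Widim_ε(A, d_{F_n})/|F_n|`. -/
def mdim {X G : Type*} [TopologicalSpace X] (ρ : X → X → ℝ) (act : G → X → X)
    (F : ℕ → Finset G) (A : Set X) : EReal :=
  limsup (fun ε : ℝ =>
      limsup (fun n : ℕ =>
        (((widimOn (dynDist ρ act (F n)) A ε : ℝ) / (F n).card : ℝ) : EReal)) atTop)
    (𝓝[>] (0 : ℝ))

/-!
Unwinding `X = ⋃ ω, S_ω(X)` `k` times around `q` yields an affine map `x ↦ c ^ k • x + v`,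
a composition `S_{ω₁} ∘ ⋯ ∘ S_{ω_k}`, that maps `X` into itself and hits `q`. It commutes with
the shift up to a translation, so it scales `d ∘ σ^g`, and therefore every `d_F`, by exactly
`c ^ k`. Shift invariance and compactness make the coordinates on `X` uniformly bounded, so
`d_F ≤ diam X < D` on `X`. Choosing `c ^ k < ε / D ≤ c ^ (k - 1)`, the image lies in the
`ε`-ball around `q` and the scaling factor `c ^ k` is at least `c ε / D`.
-/

section SelfSimilar

variable {E ι : Type*} [AddCommGroup E] [Module ℝ E]

theorem exists_pow_smul_add_mapsTo_of_eq_iUnion {X : Set E} {c : ℝ} {H : ι → E}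
    (hX : X = ⋃ ω, (fun x => c • x + H ω) '' X) {q : E} (hq : q ∈ X) (k : ℕ) :
    ∃ q' ∈ X, ∃ v : E, q = c ^ k • q' + v ∧ MapsTo (fun x => c ^ k • x + v) X X := by
  induction k with
  | zero => exact ⟨q, hq, 0, by simp, fun x hx => by simpa using hx⟩
  | succ k ih =>
    obtain ⟨q', hq', v, rfl, hmaps⟩ := ih
    rw [hX] at hq'
    obtain ⟨ω, q'', hq'', rfl⟩ := mem_iUnion.1 hq'
    refine ⟨q'', hq'', c ^ k • H ω + v, by dsimp only; module, fun x hx => ?_⟩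
    have hSx : c • x + H ω ∈ X := by
      rw [hX]; exact mem_iUnion.2 ⟨ω, x, hx, rfl⟩
    convert hmaps hSx using 1
    dsimp only; module

end SelfSimilar

section SumDist

variable {G : Type*} {α : G → ℝ}

theorem sumDist_nonneg (hα : ∀ g, 0 ≤ α g) (x y : G → ℝ) : 0 ≤ sumDist α x y :=
  tsum_nonneg fun g => mul_nonneg (hα g) (abs_nonneg _)

theorem sumDist_smul_add (a : ℝ) (v x y : G → ℝ) :
    sumDist α (a • x + v) (a • y + v) = |a| * sumDist α x y := by
  simp only [sumDist, ← tsum_mul_left, Pi.add_apply, Pi.smul_apply, smul_eq_mul,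
    add_sub_add_right_eq_sub, ← mul_sub, abs_mul]
  exact tsum_congr fun g => by ring

theorem sumDist_le_of_forall_abs_le (hα : ∀ g, 0 ≤ α g) (hα_sum : Summable α) {M : ℝ}
    {x y : G → ℝ} (hxy : ∀ g, |x g - y g| ≤ M) : sumDist α x y ≤ (∑' g, α g) * M := by
  have hle : ∀ g, α g * |x g - y g| ≤ α g * M := fun g =>
    mul_le_mul_of_nonneg_left (hxy g) (hα g)
  rw [← tsum_mul_right]
  exact (hα_sum.mul_right M).of_nonneg_of_le (fun g => mul_nonneg (hα g) (abs_nonneg _)) hle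
    |>.tsum_le_tsum hle (hα_sum.mul_right M)

end SumDist

section Shift

variable {G : Type*}

theorem shiftAct_smul_add [Mul G] (h : G) (a : ℝ) (x v : G → ℝ) :
    shiftAct h (a • x + v) = a • shiftAct h x + shiftAct h v :=
  rfl

-- The coordinate at `g` is the coordinate at `1` of a shifted point.
theorem exists_abs_apply_le_of_mapsTo_shiftAct [MulOneClass G] {X : Set (G → ℝ)}
    (hX : IsCompact X) (hinv : ∀ g, MapsTo (shiftAct g) X X) : ∃ M, ∀ x ∈ X, ∀ g, |x g| ≤ M := by
  obtain ⟨M, hM⟩ := hX.exists_bound_of_continuousOn (continuous_apply (1 : G)).continuousOn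
  refine ⟨M, fun x hx g => ?_⟩
  simpa [shiftAct] using hM _ (hinv g hx)

end Shift

theorem le_diamR {X : Type*} {ρ : X → X → ℝ} {E : Set X}
    (hE : BddAbove ((fun p : X × X => ρ p.1 p.2) '' (E ×ˢ E))) {x y : X} (hx : x ∈ E)
    (hy : y ∈ E) : ρ x y ≤ diamR ρ E :=
  le_csSup hE ⟨(x, y), ⟨hx, hy⟩, rfl⟩

theorem bddAbove_sumDist_image {G : Type*} [MulOneClass G] {α : G → ℝ} (hα : ∀ g, 0 ≤ α g)
    (hα_sum : Summable α) {X : Set (G → ℝ)} (hX : IsCompact X)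
    (hinv : ∀ g, MapsTo (shiftAct g) X X) :
    BddAbove ((fun p : (G → ℝ) × (G → ℝ) => sumDist α p.1 p.2) '' (X ×ˢ X)) := by
  obtain ⟨M, hM⟩ := exists_abs_apply_le_of_mapsTo_shiftAct hX hinv
  refine ⟨(∑' g, α g) * (M + M), ?_⟩
  rintro _ ⟨⟨x, y⟩, ⟨hx, hy⟩, rfl⟩
  exact sumDist_le_of_forall_abs_le hα hα_sum fun g =>
    (abs_sub _ _).trans (add_le_add (hM x hx g) (hM y hy g))

section DynDist

variable {X G : Type*} {ρ : X → X → ℝ} {act : G → X → X} {F : Finset G}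

theorem dynDist_nonneg (hρ : ∀ x y, 0 ≤ ρ x y) (x y : X) : 0 ≤ dynDist ρ act F x y :=
  Real.sSup_nonneg <| by rintro _ ⟨g, -, rfl⟩; exact hρ _ _

theorem dynDist_le {M : ℝ} (hM : 0 ≤ M) {x y : X} (h : ∀ g ∈ F, ρ (act g x) (act g y) ≤ M) :
    dynDist ρ act F x y ≤ M :=
  Real.sSup_le (by rintro _ ⟨g, hg, rfl⟩; exact h g hg) hM

theorem dynDist_eq_mul {r : ℝ} (hr : 0 ≤ r) {x y x' y' : X}
    (h : ∀ g, ρ (act g x') (act g y') = r * ρ (act g x) (act g y)) :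
    dynDist ρ act F x' y' = r * dynDist ρ act F x y := by
  simp only [dynDist, h, ← smul_eq_mul, ← Real.sSup_smul_of_nonneg hr, ← Set.image_smul,
    Set.image_image]

end DynDist

theorem dynDist_sumDist_smul_add {G : Type*} [Mul G] (α : G → ℝ) (F : Finset G) (a : ℝ)
    (v x y : G → ℝ) :
    dynDist (sumDist α) shiftAct F (a • x + v) (a • y + v) =
      |a| * dynDist (sumDist α) shiftAct F x y :=
  dynDist_eq_mul (abs_nonneg a) fun g => by
    simp only [shiftAct_smul_add, sumDist_smul_add]

theorem selfSimilar_contraction_into_ball_general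
    {G : Type*} [Group G]
    {Ω : Type*}
    (H : Ω → G → ℝ)
    (c : ℝ) (hc0 : 0 < c) (hc1 : c < 1)
    (X : Set (G → ℝ)) (hX_cpt : IsCompact X)
    (hX_self : X = ⋃ ω : Ω, (fun x : G → ℝ => fun g => c * x g + H ω g) '' X)
    (hX_inv : ∀ g : G, shiftAct g '' X ⊆ X)
    (α : G → ℝ) (hα_pos : ∀ g, 0 < α g) (hα_sum : Summable α)
    (F : ℕ → Finset G)
    (D : ℝ) (hD : 1 ≤ D) (hdiam : diamR (sumDist α) X < D)
    (n : ℕ) (ε : ℝ) (hε0 : 0 < ε) (hε1 : ε < 1) (q : G → ℝ) (hq : q ∈ X) :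
    ∃ φ : (G → ℝ) → (G → ℝ),
      (∀ x ∈ X, φ x ∈ X) ∧
      (∀ x ∈ X, dynDist (sumDist α) shiftAct (F n) q (φ x) ≤ ε) ∧
      ∀ x ∈ X, ∀ y ∈ X,
        c * ε / D * dynDist (sumDist α) shiftAct (F n) x y ≤
          dynDist (sumDist α) shiftAct (F n) (φ x) (φ y) := by
  have hD0 : 0 < D := by linarith
  have hα : ∀ g, 0 ≤ α g := fun g => (hα_pos g).le
  have hinv : ∀ g, MapsTo (shiftAct g) X X := fun g => mapsTo_iff_image_subset.2 (hX_inv g)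
  have hbdd := bddAbove_sumDist_image hα hα_sum hX_cpt hinv
  obtain ⟨m, hm_lt, hm_le⟩ := exists_nat_pow_near_of_lt_one (div_pos hε0 hD0)
    ((div_le_one hD0).2 (by linarith)) hc0 hc1
  obtain ⟨q', hq', v, rfl, hmaps⟩ := exists_pow_smul_add_mapsTo_of_eq_iUnion hX_self hq (m + 1)
  refine ⟨fun x => c ^ (m + 1) • x + v, fun x hx => hmaps hx, fun x hx => ?_, fun x hx y hy => ?_⟩
  · have hdyn : dynDist (sumDist α) shiftAct (F n) q' x ≤ D :=
      dynDist_le hD0.le fun g _ => (le_diamR hbdd (hinv g hq') (hinv g hx)).trans hdiam.le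
    rw [dynDist_sumDist_smul_add, abs_of_pos (pow_pos hc0 _)]
    calc c ^ (m + 1) * dynDist (sumDist α) shiftAct (F n) q' x
        ≤ ε / D * D := mul_le_mul hm_lt.le hdyn (dynDist_nonneg (sumDist_nonneg hα) _ _)
          (div_nonneg hε0.le hD0.le)
      _ = ε := div_mul_cancel₀ ε hD0.ne'
  · rw [dynDist_sumDist_smul_add, abs_of_pos (pow_pos hc0 _), pow_succ']
    gcongr
    · exact dynDist_nonneg (sumDist_nonneg hα) x y
    · rw [mul_div_assoc]
      gcongr

/-- For the self-similar dynamical system `(X, G, σ)` in `ℓ^∞` with contraction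
ratio `0 < c < 1`, metric `d`, and a constant `D ≥ 1` with `diam(X,d) < D`: for every `n`,
every `0 < ε < 1` and every `q ∈ X`, there is a map `φ : X → B̄_{d_{F_n}}(q, ε)` such that
`d_{F_n}(φ(x), φ(y)) ≥ (cε/D)·d_{F_n}(x, y)` for all `x, y ∈ X`. -/
theorem selfSimilar_contraction_into_ball
    {G : Type*} [Group G] [DecidableEq G] [Countable G]
    {Ω : Type*} [MetricSpace Ω] [CompactSpace Ω] [Nonempty Ω]
    (T : G → Ω → Ω) (hT_cont : ∀ g, Continuous (T g))
    (hT_one : ∀ ω, T 1 ω = ω)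
    (hT_mul : ∀ g h ω, T g (T h ω) = T (g * h) ω)
    (H : Ω → G → ℝ) (hH_cont : Continuous H)
    (hH_bdd : ∃ C : ℝ, ∀ ω g, |H ω g| ≤ C)
    (hH_equiv : ∀ (g : G) (ω : Ω), shiftAct g (H ω) = H (T g ω))
    (c : ℝ) (hc0 : 0 < c) (hc1 : c < 1)
    (X : Set (G → ℝ)) (hX_ne : X.Nonempty) (hX_cpt : IsCompact X)
    (hX_self : X = ⋃ ω : Ω, (fun x : G → ℝ => fun g => c * x g + H ω g) '' X)
    (hX_inv : ∀ g : G, shiftAct g '' X ⊆ X)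
    (α : G → ℝ) (hα_pos : ∀ g, 0 < α g) (hα_one : α 1 = 1) (hα_sum : Summable α)
    (F : ℕ → Finset G) (hF : IsFolner F)
    (D : ℝ) (hD : 1 ≤ D) (hdiam : diamR (sumDist α) X < D)
    (n : ℕ) (ε : ℝ) (hε0 : 0 < ε) (hε1 : ε < 1) (q : G → ℝ) (hq : q ∈ X) :
    ∃ φ : (G → ℝ) → (G → ℝ),
      (∀ x ∈ X, φ x ∈ X) ∧
      (∀ x ∈ X, dynDist (sumDist α) shiftAct (F n) q (φ x) ≤ ε) ∧
      ∀ x ∈ X, ∀ y ∈ X,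
        c * ε / D * dynDist (sumDist α) shiftAct (F n) x y ≤
          dynDist (sumDist α) shiftAct (F n) (φ x) (φ y) :=
  selfSimilar_contraction_into_ball_general H c hc0 hc1 X hX_cpt hX_self hX_inv α hα_pos hα_sum F D
    hD hdiam n ε hε0 hε1 q hq

end MeanDimPaper
end
end

section
/- Let l and m be natural numbers, and let (x^{(1)}, y^{(1)}), …, (x^{(k)}, y^{(k)}) ∈ (Ω|_{B_S(m)})^ℕ with k ≥ 4^{|B_S(m)|} + 1. Suppose Ψ_{l,m}(x^{(i)}, y^{(i)}) ≠ Ψ_{l,m}(x^{(j)}, y^{(j)}) for all i ≠ j. Then there exist indices i ≠ j such that dist_∞(Φ_{l,m}(x^{(i)}, y^{(i)}), Φ_{l,m}(x^{(j)}, y^{(j)})) ≥ b^{−l}. -/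
/-!
Put `N = ⌊w l⌋`. The digits that `Ψ_{l,m}(x, y)` fixes spell, at each `g ∈ B_S(m)`, integers
`J_g, J'_g` with `x_g ∈ [J_g, J_g + 1] / a^N` and `y_g ∈ [J'_g, J'_g + 1] / b^l` for every point
of `Φ_{l,m}(x, y)`. Among `k > 4^{|B_S(m)|}` sequences two share the parities of all these
integers; as their `Ψ`-sets differ, some `J_g` or `J'_g` differs, hence by at least `2`, which
separates the two `Φ`-sets by `a^{-N} ≥ b^{-l}` in that coordinate.
-/

open Filter Set Topology
open scoped ENNReal

noncomputable section

namespace MeanDimPaper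

/-- Restriction of a configuration to the coordinates in a finite set `D ⊆ G`. -/
def restrTo {G Λ : Type*} (D : Finset G) (x : G → Λ) : {g // g ∈ D} → Λ := fun g => x g.1

/-- The set `Ψ_{l,m}(x,y)`: sequences in `(Ω|_{B_S(m)})^ℕ` whose first `⌊wl⌋` `A`-components
and first `l` `B`-components agree with those of the given sequence (`w = log_a b`). -/
def PsiSet {G : Type*} [Group G] [DecidableEq G] (S : Finset G) (a b : ℕ)
    (Ω : Set (G → Fin a × Fin b)) (m l : ℕ)
    (z : ℕ → ({g // g ∈ ballS S m} → Fin a × Fin b)) :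
    Set (ℕ → ({g // g ∈ ballS S m} → Fin a × Fin b)) :=
  {z' | (∀ n, z' n ∈ restrTo (ballS S m) '' Ω) ∧
    (∀ n < ⌊Real.logb a b * l⌋₊, (fun g => (z' n g).1) = (fun g => (z n g).1)) ∧
    (∀ n < l, (fun g => (z' n g).2) = (fun g => (z n g).2))}

/-- The set `Φ_{l,m}(x,y) ⊆ X_Ω|_{B_S(m)}`: the image of `Ψ_{l,m}(x,y)` under
`(x', y') ↦ (Σ_n x'_n/a^n, Σ_n y'_n/b^n)`. -/
def PhiSet {G : Type*} [Group G] [DecidableEq G] (S : Finset G) (a b : ℕ)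
    (Ω : Set (G → Fin a × Fin b)) (m l : ℕ)
    (z : ℕ → ({g // g ∈ ballS S m} → Fin a × Fin b)) :
    Set (({g // g ∈ ballS S m} → ℝ) × ({g // g ∈ ballS S m} → ℝ)) :=
  (fun z' => (fun g => ∑' n : ℕ, (((z' n g).1 : ℕ) : ℝ) / (a : ℝ) ^ (n + 1),
              fun g => ∑' n : ℕ, (((z' n g).2 : ℕ) : ℝ) / (b : ℝ) ^ (n + 1))) ''
    PsiSet S a b Ω m l z

/-- The `ℓ^∞`-distance on `(ℝ²)^I`. -/
def supPairDist {I : Type*} (p q : (I → ℝ) × (I → ℝ)) : ℝ :=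
  ⨆ i, max |p.1 i - q.1 i| |p.2 i - q.2 i|

/-- `dist(E, F) = inf{ρ(p,q) : p ∈ E, q ∈ F}`. -/
def distInf {P : Type*} (ρ : P → P → ℝ) (E F : Set P) : ℝ :=
  sInf {r : ℝ | ∃ p ∈ E, ∃ q ∈ F, ρ p q = r}

/-- The restricted carpet `X_Ω|_{B_S(m)} ⊆ [0,1]^{B_S(m)} × [0,1]^{B_S(m)}`. -/
def carpetResSet {G : Type*} [Group G] [DecidableEq G] (S : Finset G) (m : ℕ) (a b : ℕ)
    (Ω : Set (G → Fin a × Fin b)) :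
    Set (({g // g ∈ ballS S m} → ℝ) × ({g // g ∈ ballS S m} → ℝ)) :=
  {p | ∃ z : ℕ → ({g // g ∈ ballS S m} → Fin a × Fin b),
        (∀ n, z n ∈ restrTo (ballS S m) '' Ω) ∧
        (∀ g, p.1 g = ∑' n : ℕ, (((z n g).1 : ℕ) : ℝ) / (a : ℝ) ^ (n + 1)) ∧
        (∀ g, p.2 g = ∑' n : ℕ, (((z n g).2 : ℕ) : ℝ) / (b : ℝ) ^ (n + 1))}

/-- `t_m(v) = #{u ∈ A^{B_S(m)} : (u,v) ∈ Ω|_{B_S(m)}}`. -/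
def tmC {G : Type*} [Group G] [DecidableEq G] (S : Finset G) (m : ℕ) (a b : ℕ)
    (Ω : Set (G → Fin a × Fin b)) (v : {g // g ∈ ballS S m} → Fin b) : ℕ :=
  Set.ncard {u : {g // g ∈ ballS S m} → Fin a |
    (fun g => (u g, v g)) ∈ restrTo (ballS S m) '' Ω}

open Classical in
/-- `Z_m = Σ_{v ∈ Ω'|_{B_S(m)}} t_m(v)^w`, where `w = log_a b`. -/
def ZmC {G : Type*} [Group G] [DecidableEq G] (S : Finset G) (m : ℕ) (a b : ℕ)
    (Ω : Set (G → Fin a × Fin b)) : ℝ :=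
  ∑ v ∈ Finset.univ.filter (fun v : {g // g ∈ ballS S m} → Fin b =>
      v ∈ restrTo (ballS S m) '' ((fun (x : G → Fin a × Fin b) (g : G) => (x g).2) '' Ω)),
    (tmC S m a b Ω v : ℝ) ^ (Real.logb a b)

/-- `f_m(u, v) = t_m(v)^{w-1}/Z_m`, the weight of the probability measure on `Ω|_{B_S(m)}`. -/
def fmC {G : Type*} [Group G] [DecidableEq G] (S : Finset G) (m : ℕ) (a b : ℕ)
    (Ω : Set (G → Fin a × Fin b)) (q : {g // g ∈ ballS S m} → Fin a × Fin b) : ℝ :=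
  (tmC S m a b Ω (fun g => (q g).2) : ℝ) ^ (Real.logb a b - 1) / ZmC S m a b Ω

section Digits

variable {r : ℕ}

def digitsPrefix (d : ℕ → Fin r) : ℕ → ℕ
  | 0 => 0
  | n + 1 => r * digitsPrefix d n + d n

theorem digitsPrefix_eq_iff {d e : ℕ → Fin r} {n : ℕ} :
    digitsPrefix d n = digitsPrefix e n ↔ ∀ i < n, d i = e i := by
  induction n with
  | zero => simp [digitsPrefix]
  | succ n ih =>
    -- the last digit is the remainder mod `r`, the rest the quotient
    have hdiv : ∀ f : ℕ → Fin r, (r * digitsPrefix f n + f n) / r = digitsPrefix f n :=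
      fun f => by rw [Nat.mul_add_div (f n).pos, Nat.div_eq_of_lt (f n).isLt, add_zero]
    have hmod : ∀ f : ℕ → Fin r, (r * digitsPrefix f n + f n) % r = f n :=
      fun f => by rw [Nat.mul_add_mod, Nat.mod_eq_of_lt (f n).isLt]
    simp only [digitsPrefix]
    constructor
    · intro h i hi
      have hlast : d n = e n := Fin.ext (by rw [← hmod d, ← hmod e, h])
      rcases Nat.lt_succ_iff_lt_or_eq.1 hi with hi | rfl
      · exact ih.1 (by rw [← hdiv d, ← hdiv e, h]) i hi
      · exact hlast
    · intro h
      rw [ih.2 fun i hi => h i (Nat.lt_succ_of_lt hi), h n (Nat.lt_succ_self n)]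

theorem sum_ofDigitsTerm_range (d : ℕ → Fin r) (n : ℕ) :
    ∑ i ∈ Finset.range n, Real.ofDigitsTerm d i = digitsPrefix d n / (r : ℝ) ^ n := by
  induction n with
  | zero => simp [digitsPrefix]
  | succ n ih =>
    have hr : (r : ℝ) ≠ 0 := Nat.cast_ne_zero.2 (d 0).pos.ne'
    rw [Finset.sum_range_succ, ih, Real.ofDigitsTerm, digitsPrefix]
    push_cast
    field_simp
    ring

theorem ofDigits_eq_digitsPrefix_add (d : ℕ → Fin r) (n : ℕ) :
    Real.ofDigits d = (digitsPrefix d n + Real.ofDigits (fun i => d (i + n))) / (r : ℝ) ^ n := by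
  rw [Real.ofDigits_eq_sum_add_ofDigits d n, sum_ofDigitsTerm_range, add_div, inv_mul_eq_div]

/-- Each expansion lies in `[J, J + 1] / rⁿ` for its prefix `J`, and equal parity makes distinct
prefixes differ by at least `2`. -/
theorem inv_pow_le_abs_ofDigits_sub {d e : ℕ → Fin r} {n : ℕ}
    (hne : digitsPrefix d n ≠ digitsPrefix e n)
    (hpar : (digitsPrefix d n : ZMod 2) = digitsPrefix e n) :
    ((r : ℝ) ^ n)⁻¹ ≤ |Real.ofDigits d - Real.ofDigits e| := by
  have hrn : (0 : ℝ) < (r : ℝ) ^ n := pow_pos (Nat.cast_pos.2 (d 0).pos) n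
  set J := digitsPrefix d n
  set J' := digitsPrefix e n
  set t := Real.ofDigits (fun i => d (i + n))
  set t' := Real.ofDigits (fun i => e (i + n))
  have hgap : 2 ≤ |(J : ℝ) - J'| := by
    rw [ZMod.natCast_eq_natCast_iff, Nat.ModEq] at hpar
    rw [le_abs]
    rcases (by omega : J + 2 ≤ J' ∨ J' + 2 ≤ J) with h | h
    · right
      have : (J : ℝ) + 2 ≤ J' := by exact_mod_cast h
      linarith
    · left
      have : (J' : ℝ) + 2 ≤ J := by exact_mod_cast h
      linarith
  have htail : |t' - t| ≤ 1 :=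
    abs_sub_le_of_le_of_le (Real.ofDigits_nonneg _) (Real.ofDigits_le_one _)
      (Real.ofDigits_nonneg _) (Real.ofDigits_le_one _) |>.trans_eq (sub_zero 1)
  rw [ofDigits_eq_digitsPrefix_add d n, ofDigits_eq_digitsPrefix_add e n, ← sub_div, abs_div,
    abs_of_pos hrn, inv_eq_one_div]
  gcongr
  calc (1 : ℝ) ≤ |(J : ℝ) - J'| - |t' - t| := by linarith
    _ ≤ |(J - J') - (t' - t)| := abs_sub_abs_le_abs_sub _ _
    _ = |J + t - (J' + t')| := by ring_nf

theorem tsum_div_pow_eq_ofDigits (d : ℕ → Fin r) :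
    ∑' n : ℕ, ((d n : ℕ) : ℝ) / (r : ℝ) ^ (n + 1) = Real.ofDigits d := by
  simp only [Real.ofDigits, Real.ofDigitsTerm, div_eq_mul_inv]

end Digits

theorem pow_floor_logb_mul_le {a b : ℝ} (ha : 1 < a) (hb : 1 ≤ b) (l : ℕ) :
    a ^ ⌊Real.logb a b * l⌋₊ ≤ b ^ l := by
  have hw : 0 ≤ Real.logb a b * l := mul_nonneg (Real.logb_nonneg ha hb) l.cast_nonneg
  calc a ^ ⌊Real.logb a b * l⌋₊ = a ^ (⌊Real.logb a b * l⌋₊ : ℝ) := (Real.rpow_natCast _ _).symm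
    _ ≤ a ^ (Real.logb a b * l) := Real.rpow_le_rpow_of_exponent_le ha.le (Nat.floor_le hw)
    _ = b ^ l := by
      rw [Real.rpow_mul (by linarith), Real.rpow_logb (by linarith) ha.ne' (by linarith),
        Real.rpow_natCast]

theorem le_supPairDist {I : Type*} [Finite I] (p q : (I → ℝ) × (I → ℝ)) (i : I) :
    max |p.1 i - q.1 i| |p.2 i - q.2 i| ≤ supPairDist p q :=
  le_ciSup (f := fun i => max |p.1 i - q.1 i| |p.2 i - q.2 i|) (Set.finite_range _).bddAbove i

theorem le_distInf {P : Type*} {ρ : P → P → ℝ} {E F : Set P} {c : ℝ}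
    (hE : E.Nonempty) (hF : F.Nonempty) (h : ∀ p ∈ E, ∀ q ∈ F, c ≤ ρ p q) :
    c ≤ distInf ρ E F := by
  obtain ⟨p, hp⟩ := hE
  obtain ⟨q, hq⟩ := hF
  refine le_csInf ⟨_, p, hp, q, hq, rfl⟩ ?_
  rintro _ ⟨p, hp, q, hq, rfl⟩
  exact h p hp q hq

/-- The digits of `x_g` and `y_g` that `Ψ_{l,m}` keeps fixed, read as integers (`w = log_a b`). -/
def prefixPair {ι : Type*} {a b : ℕ} (l : ℕ) (z : ℕ → ι → Fin a × Fin b) (g : ι) : ℕ × ℕ :=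
  (digitsPrefix (fun n => (z n g).1) ⌊Real.logb a b * l⌋₊, digitsPrefix (fun n => (z n g).2) l)

section Carpet

variable {G : Type*} [Group G] [DecidableEq G] {S : Finset G} {a b : ℕ}
  {Ω : Set (G → Fin a × Fin b)} {m l : ℕ} {z z' : ℕ → ({g // g ∈ ballS S m} → Fin a × Fin b)}
  {p q : ({g // g ∈ ballS S m} → ℝ) × ({g // g ∈ ballS S m} → ℝ)}

theorem self_mem_PsiSet (hz : ∀ n, z n ∈ restrTo (ballS S m) '' Ω) :
    z ∈ PsiSet S a b Ω m l z :=
  ⟨hz, fun _ _ => rfl, fun _ _ => rfl⟩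

theorem PsiSet_eq_of_prefixPair_eq (h : prefixPair l z = prefixPair l z') :
    PsiSet S a b Ω m l z = PsiSet S a b Ω m l z' := by
  have hx : ∀ n < ⌊Real.logb a b * l⌋₊, (fun g => (z n g).1) = fun g => (z' n g).1 :=
    fun n hn => funext fun g => digitsPrefix_eq_iff.1 (congrArg Prod.fst (congrFun h g)) n hn
  have hy : ∀ n < l, (fun g => (z n g).2) = fun g => (z' n g).2 :=
    fun n hn => funext fun g => digitsPrefix_eq_iff.1 (congrArg Prod.snd (congrFun h g)) n hn
  ext w
  refine and_congr_right fun _ => and_congr ?_ ?_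
  · exact forall₂_congr fun n hn => by rw [hx n hn]
  · exact forall₂_congr fun n hn => by rw [hy n hn]

theorem exists_ofDigits_of_mem_PhiSet (hp : p ∈ PhiSet S a b Ω m l z)
    (g : {g // g ∈ ballS S m}) :
    ∃ (x : ℕ → Fin a) (y : ℕ → Fin b),
      p.1 g = Real.ofDigits x ∧ p.2 g = Real.ofDigits y ∧
      (digitsPrefix x ⌊Real.logb a b * l⌋₊, digitsPrefix y l) = prefixPair l z g := by
  obtain ⟨w, ⟨-, hx, hy⟩, rfl⟩ := hp
  refine ⟨fun n => (w n g).1, fun n => (w n g).2, tsum_div_pow_eq_ofDigits _,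
    tsum_div_pow_eq_ofDigits _, Prod.ext ?_ ?_⟩
  · exact digitsPrefix_eq_iff.2 fun n hn => congrFun (hx n hn) g
  · exact digitsPrefix_eq_iff.2 fun n hn => congrFun (hy n hn) g

theorem le_supPairDist_of_prefixPair_ne (ha : 1 < a) (hb : 1 ≤ b)
    (hp : p ∈ PhiSet S a b Ω m l z) (hq : q ∈ PhiSet S a b Ω m l z')
    (g : {g // g ∈ ballS S m}) (hne : prefixPair l z g ≠ prefixPair l z' g)
    (hpar : Prod.map (Nat.cast : ℕ → ZMod 2) (Nat.cast : ℕ → ZMod 2) (prefixPair l z g) =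
      Prod.map Nat.cast Nat.cast (prefixPair l z' g)) :
    (b : ℝ) ^ (-(l : ℤ)) ≤ supPairDist p q := by
  obtain ⟨x, y, hpx, hpy, hpz⟩ := exists_ofDigits_of_mem_PhiSet hp g
  obtain ⟨x', y', hqx, hqy, hqz'⟩ := exists_ofDigits_of_mem_PhiSet hq g
  rw [← hpz, ← hqz'] at hne hpar
  simp only [Prod.map, Prod.mk.injEq] at hpar
  refine le_trans ?_ (le_supPairDist p q g)
  rw [zpow_neg, zpow_natCast, hpx, hpy, hqx, hqy]
  rcases not_and_or.1 (mt Prod.ext_iff.2 hne) with hne | hne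
  · calc ((b : ℝ) ^ l)⁻¹ ≤ ((a : ℝ) ^ ⌊Real.logb a b * l⌋₊)⁻¹ :=
          inv_anti₀ (by positivity)
            (pow_floor_logb_mul_le (Nat.one_lt_cast.2 ha) (Nat.one_le_cast.2 hb) l)
      _ ≤ |Real.ofDigits x - Real.ofDigits x'| := inv_pow_le_abs_ofDigits_sub hne hpar.1
      _ ≤ _ := le_max_left _ _
  · exact (inv_pow_le_abs_ofDigits_sub hne hpar.2).trans (le_max_right _ _)

end Carpet

theorem PhiSet_separation_general
    {G : Type*} [Group G] [DecidableEq G]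
    (S : Finset G)
    (a b : ℕ) (hb : 2 ≤ b) (hab : b ≤ a)
    (Ω : Set (G → Fin a × Fin b))
    (l m : ℕ) (k : ℕ) (hk : 4 ^ (ballS S m).card + 1 ≤ k)
    (z : Fin k → ℕ → ({g // g ∈ ballS S m} → Fin a × Fin b))
    (hz : ∀ i n, z i n ∈ restrTo (ballS S m) '' Ω)
    (hsep : ∀ i j, i ≠ j → PsiSet S a b Ω m l (z i) ≠ PsiSet S a b Ω m l (z j)) :
    ∃ i j, i ≠ j ∧
      (b : ℝ) ^ (-(l : ℤ)) ≤
        distInf supPairDist (PhiSet S a b Ω m l (z i)) (PhiSet S a b Ω m l (z j)) := by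
  have hcard : Fintype.card ({g // g ∈ ballS S m} → ZMod 2 × ZMod 2) < Fintype.card (Fin k) := by
    simpa [Fintype.card_fun, Fintype.card_prod, ZMod.card] using hk
  obtain ⟨i, j, hij, hpar⟩ := Fintype.exists_ne_map_eq_of_card_lt
    (fun i g => Prod.map (Nat.cast : ℕ → ZMod 2) (Nat.cast : ℕ → ZMod 2) (prefixPair l (z i) g))
    hcard
  obtain ⟨g, hg⟩ : ∃ g, prefixPair l (z i) g ≠ prefixPair l (z j) g := by
    by_contra! h
    exact hsep i j hij (PsiSet_eq_of_prefixPair_eq (funext h))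
  refine ⟨i, j, hij, le_distInf ⟨_, z i, self_mem_PsiSet (hz i), rfl⟩
    ⟨_, z j, self_mem_PsiSet (hz j), rfl⟩ fun p hp q hq => ?_⟩
  exact le_supPairDist_of_prefixPair_ne (by omega) (by omega) hp hq g hg (congrFun hpar g)

/-- If `(x^{(1)},y^{(1)}), …, (x^{(k)},y^{(k)}) ∈ (Ω|_{B_S(m)})^ℕ` with
`k ≥ 4^{|B_S(m)|} + 1` determine pairwise distinct sets `Ψ_{l,m}`, then two of the associated
sets `Φ_{l,m}` are at `ℓ^∞`-distance at least `b^{-l}`. -/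
theorem PhiSet_separation
    {G : Type*} [Group G] [DecidableEq G] [Countable G]
    (S : Finset G) (hS_ne : S.Nonempty) (hS_symm : ∀ s ∈ S, s⁻¹ ∈ S)
    (hS_gen : Subgroup.closure (S : Set G) = ⊤)
    (hFolner : IsFolner (fun m => ballS S m))
    (a b : ℕ) (hb : 2 ≤ b) (hab : b ≤ a)
    (α : G → ℝ) (hα_pos : ∀ g, 0 < α g) (hα_one : α 1 = 1) (hα_sum : Summable α)
    (Ω : Set (G → Fin a × Fin b)) (hΩ_ne : Ω.Nonempty) (hΩ_closed : IsClosed Ω)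
    (hΩ_inv : ∀ h : G, shiftAct h '' Ω ⊆ Ω)
    (l m : ℕ) (k : ℕ) (hk : 4 ^ (ballS S m).card + 1 ≤ k)
    (z : Fin k → ℕ → ({g // g ∈ ballS S m} → Fin a × Fin b))
    (hz : ∀ i n, z i n ∈ restrTo (ballS S m) '' Ω)
    (hsep : ∀ i j, i ≠ j → PsiSet S a b Ω m l (z i) ≠ PsiSet S a b Ω m l (z j)) :
    ∃ i j, i ≠ j ∧
      (b : ℝ) ^ (-(l : ℤ)) ≤
        distInf supPairDist (PhiSet S a b Ω m l (z i)) (PhiSet S a b Ω m l (z j)) :=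
  PhiSet_separation_general S a b hb hab Ω l m k hk z hz hsep

end MeanDimPaper
end
end
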